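/- Commit invariant of the transaction-commit model: if δInit →TC* δ and there exists a resource manager r with δ r = Committed, then for every resource manager r', δ r' = Prepared or δ r' = Committed. -/

import Mathlib

/-- The four states of a resource manager in the transaction-commit model. -/
inductive RMState where
  | working
  | prepared
  | committed
  | aborted
deriving DecidableEq

/-- Every resource manager is prepared or committed. -/
def CanCommit {RMs : Type} (δ : RMs → RMState) : Prop :=
  ∀ r', δ r' = RMState.prepared ∨ δ r' = RMState.committed

/-- No resource manager is committed. -/
def NotCommitted {RMs : Type} (δ : RMs → RMState) : Prop :=
  ∀ r', δ r' ≠ RMState.committed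

/-- The transition relation of the transaction-commit model. -/
inductive TCStep {RMs : Type} [DecidableEq RMs] :
    (RMs → RMState) → (RMs → RMState) → Prop where
  | prepare (δ : RMs → RMState) (r : RMs) (h : δ r = RMState.working) :
      TCStep δ (Function.update δ r RMState.prepared)
  | commit (δ : RMs → RMState) (r : RMs) (h : δ r = RMState.prepared)
      (hc : CanCommit δ) :
      TCStep δ (Function.update δ r RMState.committed)
  | abort (δ : RMs → RMState) (r : RMs)
      (h : δ r = RMState.working ∨ δ r = RMState.prepared)
      (hn : NotCommitted δ) :
      TCStep δ (Function.update δ r RMState.aborted)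

/-! Every reachable state is either committable (all resource managers prepared or committed)
or has no committed resource manager. A commit needs a committable state and keeps it committable;
a prepare can only fire in a state with a working manager, hence in one with nothing committed, and
neither prepare nor abort creates a committed manager. A committed manager therefore rules out the
second alternative. -/

def TCInvariant {RMs : Type} (δ : RMs → RMState) : Prop :=
  CanCommit δ ∨ NotCommitted δ

theorem not_canCommit_of_working {RMs : Type} {δ : RMs → RMState} {r : RMs}
    (hr : δ r = RMState.working) : ¬CanCommit δ := by
  intro hδ
  rcases hδ r with h | h <;> rw [hr] at h <;> cases h

section

variable {RMs : Type} [DecidableEq RMs] {δ : RMs → RMState}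

theorem CanCommit.update (hδ : CanCommit δ) (r : RMs) {s : RMState}
    (hs : s = RMState.prepared ∨ s = RMState.committed) :
    CanCommit (Function.update δ r s) := by
  intro r'
  rcases eq_or_ne r' r with rfl | hne
  · simpa using hs
  · simpa [Function.update_of_ne hne] using hδ r'

theorem NotCommitted.update (hδ : NotCommitted δ) (r : RMs) {s : RMState}
    (hs : s ≠ RMState.committed) :
    NotCommitted (Function.update δ r s) := by
  intro r'
  rcases eq_or_ne r' r with rfl | hne
  · simpa using hs
  · simpa [Function.update_of_ne hne] using hδ r'

end

theorem tcInvariant_init {RMs : Type} : TCInvariant (fun _ : RMs => RMState.working) :=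
  Or.inr fun _ h => nomatch h

theorem TCStep.tcInvariant {RMs : Type} [DecidableEq RMs] {δ δ' : RMs → RMState}
    (hstep : TCStep δ δ') (hδ : TCInvariant δ) : TCInvariant δ' := by
  cases hstep with
  | prepare r hr =>
    have hnc : NotCommitted δ := hδ.resolve_left (not_canCommit_of_working hr)
    exact Or.inr (hnc.update r (by decide))
  | commit r _ hc => exact Or.inl (hc.update r (Or.inr rfl))
  | abort r _ hn => exact Or.inr (hn.update r (by decide))

theorem tcInvariant_of_reachable {RMs : Type} [DecidableEq RMs] {δ : RMs → RMState}
    (hreach : Relation.ReflTransGen TCStep (fun _ => RMState.working) δ) : TCInvariant δ := by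
  induction hreach with
  | refl => exact tcInvariant_init
  | tail _ hstep ih => exact hstep.tcInvariant ih

/-- Commit invariant of the transaction-commit model: in any reachable state in which some
resource manager is committed, every resource manager is prepared or committed. -/
theorem tc_commit_invariant {RMs : Type} [DecidableEq RMs] (δ : RMs → RMState)
    (hreach : Relation.ReflTransGen TCStep (fun _ => RMState.working) δ)
    (hcommit : ∃ r, δ r = RMState.committed) :
    ∀ r' : RMs, δ r' = RMState.prepared ∨ δ r' = RMState.committed := by
  obtain ⟨r, hr⟩ := hcommit
  exact (tcInvariant_of_reachable hreach).resolve_right fun hn => hn r hr
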